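/- arXiv:1502.00383 — 5 statements merged into one kernel-verified Lean document; each statement's English description precedes it below -/
import Mathlib

section
/- Let p_1, ..., p_r be distinct primes and K = Q(√p_1, ..., √p_r). If L is a subfield of K with [L : Q] = 2, then L = Q(√(∏_{i∈I} p_i)) for some nonempty subset I ⊆ {1, ..., r}. -/
/-!
A quadratic subfield `L` is `ℚ(y)` for some irrational `y` with `y² ∈ ℚ` (complete the square in
the minimal polynomial of any irrational element of `L`). Adjoining the `√pᵢ` one at a time, the
shape of such a `y` is forced by the following fact: if `F` is a field, `s² ∈ F`, `s ∉ F`, and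
`y = a + b s ∈ F(s)` has `y² = a² + b² s² + 2ab s ∈ F`, then `ab = 0`, so `y` lies in `F` or in
`F · s`. By induction, `y = c · √(∏_{i ∈ I} pᵢ)` with `c ∈ ℚ`, and `I ≠ ∅`
because `y ∉ ℚ`.
-/

open IntermediateField Polynomial Module

namespace IntermediateField

variable {K L : Type*} [Field K] [Field L] [Algebra K L]

theorem exists_add_algebraMap_sq_mem_bot_of_natDegree_minpoly_eq_two [NeZero (2 : K)] {x : L}
    (hx : (minpoly K x).natDegree = 2) :
    ∃ a : K, (x + algebraMap K L a) ^ 2 ∈ (⊥ : IntermediateField K L) := by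
  have hint : IsIntegral K x := by
    by_contra h
    simp [minpoly.eq_zero h] at hx
  set b := (minpoly K x).coeff 1
  set c := (minpoly K x).coeff 0
  have hrel : x ^ 2 + algebraMap K L b * x + algebraMap K L c = 0 := by
    have := minpoly.aeval K x
    rw [(minpoly.monic hint).as_sum, hx] at this
    simpa [Finset.sum_range_succ, add_assoc, add_comm, add_left_comm] using this
  have h2 : (2 : L) ≠ 0 := by exact_mod_cast (NeZero.of_faithfulSMul K L 2).out
  refine ⟨b / 2, mem_bot.mpr ⟨(b / 2) ^ 2 - c, ?_⟩⟩
  simp only [map_sub, map_div₀, map_pow, map_ofNat]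
  field_simp
  linear_combination -4 * hrel

theorem eq_adjoin_simple_of_finrank_eq_two {M : IntermediateField K L}
    (hM : finrank K M = 2) {y : L} (hyM : y ∈ M) (hy : y ∉ (⊥ : IntermediateField K L)) :
    M = K⟮y⟯ := by
  have : FiniteDimensional K M := .of_finrank_eq_succ hM
  have hle : K⟮y⟯ ≤ M := adjoin_simple_le_iff.mpr hyM
  have hint : IsIntegral K y := isIntegral_iff.mp (Algebra.IsIntegral.isIntegral (⟨y, hyM⟩ : M))
  have : FiniteDimensional K K⟮y⟯ := adjoin.finiteDimensional hint
  have h1 : finrank K K⟮y⟯ ≠ 1 := fun h => hy (finrank_adjoin_simple_eq_one_iff.mp h)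
  have h0 : 0 < finrank K K⟮y⟯ := finrank_pos
  exact (eq_of_le_of_finrank_le hle (by omega)).symm

theorem exists_mem_sq_mem_bot_of_finrank_eq_two [NeZero (2 : K)]
    {M : IntermediateField K L} (hM : finrank K M = 2) :
    ∃ y ∈ M, y ∉ (⊥ : IntermediateField K L) ∧ y ^ 2 ∈ (⊥ : IntermediateField K L) := by
  obtain ⟨x, hxM, hx⟩ : ∃ x ∈ M, x ∉ (⊥ : IntermediateField K L) := by
    by_contra! h
    rw [le_bot_iff.mp (show M ≤ ⊥ from h), IntermediateField.finrank_bot] at hM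
    omega
  have : FiniteDimensional K M := .of_finrank_eq_succ hM
  have hint : IsIntegral K x := isIntegral_iff.mp (Algebra.IsIntegral.isIntegral (⟨x, hxM⟩ : M))
  rw [eq_adjoin_simple_of_finrank_eq_two hM hxM hx, adjoin.finrank hint] at hM
  obtain ⟨a, ha⟩ := exists_add_algebraMap_sq_mem_bot_of_natDegree_minpoly_eq_two hM
  refine ⟨x + algebraMap K L a, add_mem hxM (M.algebraMap_mem a), fun h => hx ?_, ha⟩
  simpa using sub_mem h (algebraMap_mem ⊥ a)

section AdjoinSquareRoot

variable (F : IntermediateField K L)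

theorem exists_eq_add_mul_of_mem_adjoin_simple {s : L} (hs : s ^ 2 ∈ F) {y : L} (hy : y ∈ F⟮s⟯) :
    ∃ a ∈ F, ∃ b ∈ F, y = a + b * s := by
  have hint : IsIntegral F s :=
    ⟨X ^ 2 - C ⟨s ^ 2, hs⟩, monic_X_pow_sub_C _ two_ne_zero, by simp⟩
  rw [← mem_toSubalgebra, adjoin_simple_toSubalgebra_of_isAlgebraic hint.isAlgebraic] at hy
  induction hy using Algebra.adjoin_induction with
  | mem x hx =>
    rw [Set.mem_singleton_iff] at hx
    exact ⟨0, F.zero_mem, 1, F.one_mem, by simp [hx]⟩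
  | algebraMap a => exact ⟨a, a.2, 0, F.zero_mem, by simp⟩
  | add x y _ _ hx hy =>
    obtain ⟨a, ha, b, hb, rfl⟩ := hx
    obtain ⟨a', ha', b', hb', rfl⟩ := hy
    exact ⟨a + a', add_mem ha ha', b + b', add_mem hb hb', by ring⟩
  | mul x y _ _ hx hy =>
    obtain ⟨a, ha, b, hb, rfl⟩ := hx
    obtain ⟨a', ha', b', hb', rfl⟩ := hy
    refine ⟨a * a' + b * b' * s ^ 2, ?_, a * b' + b * a', ?_, by ring⟩
    · exact add_mem (mul_mem ha ha') (mul_mem (mul_mem hb hb') hs)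
    · exact add_mem (mul_mem ha hb') (mul_mem hb ha')

theorem mem_or_exists_eq_mul_of_sq_mem [NeZero (2 : K)] {s : L} (hs : s ^ 2 ∈ F) (hsF : s ∉ F)
    {y : L} (hy : y ∈ F⟮s⟯) (hy2 : y ^ 2 ∈ F) : y ∈ F ∨ ∃ b ∈ F, y = b * s := by
  obtain ⟨a, ha, b, hb, rfl⟩ := exists_eq_add_mul_of_mem_adjoin_simple F hs hy
  have hab : a * b = 0 := by
    by_contra hab
    obtain ⟨ha0, hb0⟩ := mul_ne_zero_iff.mp hab
    have h2 : (2 : L) ≠ 0 := by exact_mod_cast (NeZero.of_faithfulSMul K L 2).out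
    -- the cross term `2 a b s` of `(a + b s)^2` would put `s` in `F`
    refine hsF ?_
    have hs_eq : s = ((a + b * s) ^ 2 - a ^ 2 - b ^ 2 * s ^ 2) / (2 * (a * b)) := by
      field_simp
      ring
    rw [hs_eq]
    refine div_mem (sub_mem (sub_mem hy2 (pow_mem ha 2)) (mul_mem (pow_mem hb 2) hs)) ?_
    exact mul_mem (ofNat_mem F 2) (mul_mem ha hb)
  rcases mul_eq_zero.mp hab with rfl | rfl
  · exact .inr ⟨b, hb, zero_add _⟩
  · exact .inl (by simpa using ha)

end AdjoinSquareRoot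

end IntermediateField

theorem exists_mem_bot_eq_mul_sqrt_prod_of_sq_mem_bot {ι : Type*} (n : ι → ℕ) (S : Finset ι)
    {y : ℝ} (hy : y ∈ adjoin ℚ ((fun i => Real.sqrt (n i)) '' S))
    (hy2 : y ^ 2 ∈ (⊥ : IntermediateField ℚ ℝ)) :
    ∃ I ⊆ S, ∃ c ∈ (⊥ : IntermediateField ℚ ℝ), y = c * Real.sqrt (∏ i ∈ I, (n i : ℝ)) := by
  classical
  induction S using Finset.induction_on generalizing y with
  | empty =>
    rw [Finset.coe_empty, Set.image_empty, adjoin_empty] at hy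
    exact ⟨∅, subset_rfl, y, hy, by simp⟩
  | @insert j T hj ih =>
    set F := adjoin ℚ ((fun i => Real.sqrt (n i)) '' T)
    set s := Real.sqrt (n j)
    have hs2 : s ^ 2 = n j := Real.sq_sqrt (Nat.cast_nonneg _)
    have hyF : y ∈ (F⟮s⟯).restrictScalars ℚ := by
      rw [Finset.coe_insert, Set.image_insert_eq] at hy
      rwa [show F⟮s⟯.restrictScalars ℚ = _ from adjoin_adjoin_left ℚ _ {s}, Set.union_singleton]
    have hextend {y : ℝ} (hyF : y ∈ F) (hy2 : y ^ 2 ∈ (⊥ : IntermediateField ℚ ℝ)) :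
        ∃ I ⊆ insert j T, ∃ c ∈ (⊥ : IntermediateField ℚ ℝ),
          y = c * Real.sqrt (∏ i ∈ I, (n i : ℝ)) := by
      obtain ⟨I, hIT, hI⟩ := ih hyF hy2
      exact ⟨I, hIT.trans (Finset.subset_insert _ _), hI⟩
    by_cases hsF : s ∈ F
    · rw [mem_restrictScalars, (adjoin_simple_eq_bot_iff (F := F) (α := s)).mpr
        (mem_bot.mpr ⟨⟨s, hsF⟩, rfl⟩)] at hyF
      obtain ⟨z, rfl⟩ := mem_bot.mp hyF
      exact hextend z.2 hy2
    have hs : s ^ 2 ∈ F := hs2 ▸ F.natCast_mem _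
    rcases F.mem_or_exists_eq_mul_of_sq_mem hs hsF hyF ((bot_le : ⊥ ≤ F) hy2) with
      hyF | ⟨b, hbF, rfl⟩
    · exact hextend hyF hy2
    have hs0 : s ≠ 0 := fun h => hsF (h ▸ F.zero_mem)
    have hb2 : b ^ 2 ∈ (⊥ : IntermediateField ℚ ℝ) := by
      rw [show b ^ 2 = (b * s) ^ 2 / s ^ 2 by field_simp, hs2]
      exact div_mem hy2 (IntermediateField.natCast_mem _ _)
    obtain ⟨I, hIT, c, hc, rfl⟩ := ih hbF hb2
    refine ⟨insert j I, Finset.insert_subset_insert _ hIT, c, hc, ?_⟩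
    rw [Finset.prod_insert fun h => hj (hIT h), Real.sqrt_mul (Nat.cast_nonneg _)]
    ring

theorem stmt1_general (r : ℕ) (p : Fin r → ℕ)
    (L : IntermediateField ℚ ℝ)
    (hL : L ≤ IntermediateField.adjoin ℚ (Set.range fun i => Real.sqrt (p i)))
    (hdeg : Module.finrank ℚ L = 2) :
    ∃ I : Finset (Fin r), I.Nonempty ∧
      L = IntermediateField.adjoin ℚ {Real.sqrt (∏ i ∈ I, (p i : ℝ))} := by
  obtain ⟨y, hyL, hy, hy2⟩ := exists_mem_sq_mem_bot_of_finrank_eq_two hdeg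
  have hyK : y ∈ adjoin ℚ ((fun i => Real.sqrt (p i)) '' (Finset.univ : Finset (Fin r))) := by
    simpa using hL hyL
  obtain ⟨I, -, c, hc, rfl⟩ := exists_mem_bot_eq_mul_sqrt_prod_of_sq_mem_bot p _ hyK hy2
  have hw : Real.sqrt (∏ i ∈ I, (p i : ℝ)) ∉ (⊥ : IntermediateField ℚ ℝ) :=
    fun h => hy (mul_mem hc h)
  have hc0 : c ≠ 0 := by
    rintro rfl
    exact hy (by simp)
  refine ⟨I, ?_, eq_adjoin_simple_of_finrank_eq_two hdeg ?_ hw⟩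
  · rw [Finset.nonempty_iff_ne_empty]
    rintro rfl
    exact hw (by simp)
  · simpa [hc0] using mul_mem (inv_mem ((bot_le : ⊥ ≤ L) hc)) hyL

/-- If L is a subfield of ℚ(√p_1, ..., √p_r) with [L:ℚ] = 2, then
L = ℚ(√(∏_{i∈I} p_i)) for some nonempty I ⊆ {1,...,r}. -/
theorem stmt1 (r : ℕ) (p : Fin r → ℕ) (hp : ∀ i, Nat.Prime (p i))
    (hinj : Function.Injective p)
    (L : IntermediateField ℚ ℝ)
    (hL : L ≤ IntermediateField.adjoin ℚ (Set.range fun i => Real.sqrt (p i)))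
    (hdeg : Module.finrank ℚ L = 2) :
    ∃ I : Finset (Fin r), I.Nonempty ∧
      L = IntermediateField.adjoin ℚ {Real.sqrt (∏ i ∈ I, (p i : ℝ))} :=
  stmt1_general r p L hL hdeg
end

section
/- Let p_1, ..., p_r be distinct primes. The Q-linear map Q(√p_1) ⊗_Q Q(√p_2) ⊗_Q ... ⊗_Q Q(√p_r) → Q(√p_1, ..., √p_r) given by x_1 ⊗ ... ⊗ x_r ↦ x_1 · x_2 · ... · x_r is an isomorphism of Q-vector spaces. Equivalently, [Q(√p_1, ..., √p_r) : Q] = 2^r. -/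
/-!
For a finite set `s` of primes let `K_s = ℚ(√q : q ∈ s)` (`sqrtField s`). By induction on `s`, no
`√d` with `d > 1` squarefree and prime to `s` lies in `K_s`: if `√d ∈ K_t(√q)`, squaring
`√d = a + b√q` forces `ab = 0`, so `√d` or `√(dq)` already lies in `K_t`. Hence each adjunction
doubles the degree and `[K_s : ℚ] = 2^|s|`. The multiplication map from `⨂ ℚ(√pᵢ)` to the
compositum is onto, since a compositum of algebraic extensions is already generated by them as a
ring, and both sides have dimension `2^r`.
-/

open Polynomial IntermediateField Module
open scoped TensorProduct

theorem Module.finrank_piTensorProduct {R ι : Type*} [CommRing R] [StrongRankCondition R]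
    [Fintype ι] {M : ι → Type*} [∀ i, AddCommGroup (M i)] [∀ i, Module R (M i)]
    [∀ i, Module.Free R (M i)] [∀ i, Module.Finite R (M i)] :
    finrank R (⨂[R] i, M i) = ∏ i, finrank R (M i) := by
  classical
  rw [finrank_eq_card_basis (Basis.piTensorProduct fun i ↦ Free.chooseBasis R (M i)),
    Fintype.card_pi]
  simp only [finrank_eq_card_chooseBasisIndex]

namespace PiTensorProduct

variable {R ι S : Type*} [CommSemiring R] [Fintype ι] {A : ι → Type*} [∀ i, CommSemiring (A i)]
  [∀ i, Algebra R (A i)] [CommSemiring S] [Algebra R S]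

noncomputable def productMap (f : Π i, A i →ₐ[R] S) : (⨂[R] i, A i) →ₐ[R] S :=
  liftAlgHom ((MultilinearMap.mkPiAlgebra R ι S).compLinearMap fun i ↦ (f i).toLinearMap)
    (by simp) (fun x y ↦ by simp [Finset.prod_mul_distrib])

@[simp]
theorem productMap_tprod (f : Π i, A i →ₐ[R] S) (x : Π i, A i) :
    productMap f (tprod R x) = ∏ i, f i (x i) :=
  (lift.tprod x).trans (by simp)

theorem range_le_range_productMap (f : Π i, A i →ₐ[R] S) (i : ι) :
    (f i).range ≤ (productMap f).range := by
  classical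
  rintro _ ⟨a, rfl⟩
  refine ⟨tprod R (Pi.mulSingle i a), ?_⟩
  change productMap f _ = f i a
  rw [productMap_tprod, Finset.prod_eq_single i (fun j _ hj ↦ by simp [hj]) (by simp)]
  simp

end PiTensorProduct

namespace IntermediateField

section Compositum

variable {K L ι : Type*} [Field K] [Field L] [Algebra K L] [Fintype ι]
  (E : ι → IntermediateField K L)

theorem range_productMap_val [∀ i, Algebra.IsAlgebraic K (E i)] :
    (PiTensorProduct.productMap fun i ↦ (E i).val).range = (⨆ i, E i).toSubalgebra := by
  apply le_antisymm
  · rintro _ ⟨z, rfl⟩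
    induction z using PiTensorProduct.induction_on with
    | smul_tprod c x =>
      change PiTensorProduct.productMap _ (c • _) ∈ _
      rw [map_smul, PiTensorProduct.productMap_tprod]
      exact Subalgebra.smul_mem _ (prod_mem fun i _ ↦ le_iSup E i (x i).2) c
    | add z w hz hw => rw [map_add]; exact add_mem hz hw
  · rw [iSup_eq_adjoin, adjoin_toSubalgebra_of_isAlgebraic, Algebra.adjoin_le_iff]
    · intro x hx
      obtain ⟨i, hi⟩ := Set.mem_iUnion.mp hx
      exact PiTensorProduct.range_le_range_productMap _ i ⟨⟨x, hi⟩, rfl⟩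
    · intro x hx
      obtain ⟨i, hi⟩ := Set.mem_iUnion.mp hx
      exact isAlgebraic_iff.mp (Algebra.IsAlgebraic.isAlgebraic (⟨x, hi⟩ : E i))

theorem exists_linearEquiv_piTensorProduct_of_finrank_iSup [∀ i, FiniteDimensional K (E i)]
    (h : finrank K ↥(⨆ i, E i) = ∏ i, finrank K (E i)) :
    ∃ T : (⨂[K] i, E i) ≃ₗ[K] ↥(⨆ i, E i),
      ∀ x, (T (PiTensorProduct.tprod K x) : L) = ∏ i, (x i : L) := by
  set M := PiTensorProduct.productMap fun i ↦ (E i).val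
  have hrange := range_productMap_val E
  let T : (⨂[K] i, E i) →ₗ[K] ↥(⨆ i, E i) :=
    M.toLinearMap.codRestrict (⨆ i, E i).toSubalgebra.toSubmodule
      fun z ↦ hrange ▸ M.mem_range_self z
  have hsurj : Function.Surjective T := by
    rintro ⟨y, hy⟩
    obtain ⟨z, hz⟩ : y ∈ M.range := hrange ▸ hy
    exact ⟨z, Subtype.ext hz⟩
  have hinj : Function.Injective T := (LinearMap.injective_iff_surjective_of_finrank_eq_finrank
      (by rw [h, finrank_piTensorProduct])).mpr hsurj
  exact ⟨LinearEquiv.ofBijective T ⟨hinj, hsurj⟩, fun x ↦ PiTensorProduct.productMap_tprod _ x⟩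

end Compositum

section QuadraticExtension

variable {K F L : Type*} [Field K] [Field F] [Field L] [Algebra K L] [Algebra F L] {α : L}

theorem mem_bot_iff_mem (E : IntermediateField K L) {x : L} :
    x ∈ (⊥ : IntermediateField E L) ↔ x ∈ E := by
  rw [← mem_restrictScalars K, restrictScalars_bot_eq_self]

theorem isIntegral_of_sq_mem_bot (hα : α ^ 2 ∈ (⊥ : IntermediateField F L)) :
    IsIntegral F α := by
  obtain ⟨c, hc⟩ := mem_bot.mp hα
  exact ⟨X ^ 2 - C c, monic_X_pow_sub_C c two_ne_zero, by simp [hc]⟩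

theorem exists_eq_add_mul_of_mem_adjoin_of_sq_mem_bot
    (hα : α ^ 2 ∈ (⊥ : IntermediateField F L)) {x : L} (hx : x ∈ F⟮α⟯) :
    ∃ a b : F, x = algebraMap F L a + algebraMap F L b * α := by
  obtain ⟨c, hc⟩ := mem_bot.mp hα
  have hmonic : (X ^ 2 - C c : F[X]).Monic := monic_X_pow_sub_C c two_ne_zero
  rw [← mem_toSubalgebra, adjoin_simple_toSubalgebra_of_isAlgebraic
    (isIntegral_of_sq_mem_bot hα).isAlgebraic, Algebra.adjoin_singleton_eq_range_aeval] at hx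
  obtain ⟨P, rfl⟩ := hx
  set R := P %ₘ (X ^ 2 - C c)
  have hR : R.natDegree < 2 := by
    simpa using natDegree_modByMonic_lt P hmonic fun h ↦ by simpa using congrArg natDegree h
  refine ⟨R.coeff 0, R.coeff 1, ?_⟩
  rw [AlgHom.toRingHom_eq_coe, RingHom.coe_coe, ← aeval_modByMonic_eq_self_of_root (p := P)
    (by simp [hc] : aeval α (X ^ 2 - C c) = 0), aeval_eq_sum_range' hR]
  simp [Finset.sum_range_succ, Algebra.smul_def]

theorem finrank_adjoin_of_sq_mem_bot (hα : α ^ 2 ∈ (⊥ : IntermediateField F L))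
    (hα' : α ∉ (⊥ : IntermediateField F L)) : finrank F F⟮α⟯ = 2 := by
  obtain ⟨c, hc⟩ := mem_bot.mp hα
  have hint := isIntegral_of_sq_mem_bot hα
  have hdvd : minpoly F α ∣ X ^ 2 - C c := minpoly.dvd F α (by simp [hc])
  have hle : (minpoly F α).natDegree ≤ 2 := by
    simpa using natDegree_le_of_dvd hdvd (monic_X_pow_sub_C c two_ne_zero).ne_zero
  have hne : (minpoly F α).natDegree ≠ 1 := fun h ↦
    hα' (mem_bot.mpr (minpoly.natDegree_eq_one_iff.mp h))
  have hpos := minpoly.natDegree_pos hint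
  rw [adjoin.finrank hint]
  omega

theorem finrank_sup_adjoin_of_sq_mem (E : IntermediateField K L) (hα : α ^ 2 ∈ E)
    (hα' : α ∉ E) : finrank K ↥(E ⊔ K⟮α⟯) = finrank K E * 2 := by
  rw [← mem_bot_iff_mem] at hα hα'
  rw [← restrictScalars_adjoin_eq_sup, ← finrank_adjoin_of_sq_mem_bot hα hα']
  exact (Module.finrank_mul_finrank K E E⟮α⟯).symm

theorem mem_or_mul_mem_of_mem_sup_adjoin [NeZero (2 : L)] (E : IntermediateField K L) {β : L}
    (hα : α ^ 2 ∈ E) (hβ : β ^ 2 ∈ E) (hβ' : β ∉ E) (h : α ∈ E ⊔ K⟮β⟯) :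
    α ∈ E ∨ α * β ∈ E := by
  rw [← restrictScalars_adjoin_eq_sup, mem_restrictScalars] at h
  rw [← mem_bot_iff_mem] at hβ
  obtain ⟨a, b, rfl⟩ := exists_eq_add_mul_of_mem_adjoin_of_sq_mem_bot hβ h
  rw [mem_bot_iff_mem] at hβ
  simp only [IntermediateField.algebraMap_apply] at hα ⊢
  have hA : (a : L) ∈ E := a.2
  have hB : (b : L) ∈ E := b.2
  have hAB : (a : L) * b = 0 := by
    by_contra hAB
    obtain ⟨hA0, hB0⟩ := mul_ne_zero_iff.mp hAB
    refine hβ' ?_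
    have : β = ((a + b * β) ^ 2 - a ^ 2 - b ^ 2 * β ^ 2) / (2 * a * b) := by
      field_simp
      ring
    rw [this]
    exact div_mem (sub_mem (sub_mem hα (pow_mem hA 2)) (mul_mem (pow_mem hB 2) hβ))
      (mul_mem (mul_mem (ofNat_mem _ 2) hA) hB)
  rcases mul_eq_zero.mp hAB with hA0 | hB0
  · right
    rw [hA0, zero_add, mul_assoc, ← sq]
    exact mul_mem hB hβ
  · left
    rwa [hB0, zero_mul, add_zero]

end QuadraticExtension

end IntermediateField

noncomputable def sqrtField (s : Finset ℕ) : IntermediateField ℚ ℝ :=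
  ⨆ n ∈ s, ℚ⟮√(n : ℝ)⟯

theorem sqrtField_empty : sqrtField ∅ = ⊥ := by
  simp [sqrtField]

theorem sqrtField_insert (q : ℕ) (s : Finset ℕ) :
    sqrtField (insert q s) = sqrtField s ⊔ ℚ⟮√(q : ℝ)⟯ := by
  rw [sqrtField, Finset.iSup_insert, sup_comm, sqrtField]

theorem sq_sqrt_natCast_mem (E : IntermediateField ℚ ℝ) (n : ℕ) : √(n : ℝ) ^ 2 ∈ E := by
  rw [Real.sq_sqrt n.cast_nonneg]
  exact E.natCast_mem n

theorem Squarefree.not_isSquare {M : Type*} [Monoid M] {d : M} (hd : Squarefree d)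
    (hd1 : ¬IsUnit d) : ¬IsSquare d := by
  rintro ⟨r, rfl⟩
  exact hd1 ((hd r dvd_rfl).mul (hd r dvd_rfl))

theorem sqrt_notMem_sqrtField {s : Finset ℕ} (hs : ∀ q ∈ s, q.Prime) {d : ℕ}
    (hd : Squarefree d) (hd1 : d ≠ 1) (hds : Disjoint s d.primeFactors) :
    √(d : ℝ) ∉ sqrtField s := by
  induction s using Finset.induction_on generalizing d with
  | empty =>
    rw [sqrtField_empty, mem_bot]
    rintro ⟨x, hx⟩
    have hirr := irrational_sqrt_natCast_iff.mpr (hd.not_isSquare (Nat.isUnit_iff.not.mpr hd1))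
    exact hirr ⟨x, by simpa using hx⟩
  | @insert q t hqt ih =>
    have ht : ∀ p ∈ t, p.Prime := fun p hp ↦ hs p (Finset.mem_insert_of_mem hp)
    have hq : q.Prime := hs q (Finset.mem_insert_self q t)
    have htq : Disjoint t q.primeFactors := by
      rwa [hq.primeFactors, Finset.disjoint_singleton_right]
    obtain ⟨hqd, htd⟩ := Finset.disjoint_insert_left.mp hds
    rw [sqrtField_insert]
    intro hmem
    rcases mem_or_mul_mem_of_mem_sup_adjoin _ (sq_sqrt_natCast_mem _ d) (sq_sqrt_natCast_mem _ q)
      (ih ht hq.squarefree hq.one_lt.ne' htq) hmem with h | h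
    · exact ih ht hd hd1 htd h
    · rw [← Real.sqrt_mul d.cast_nonneg, ← Nat.cast_mul] at h
      have hcop : d.Coprime q := Nat.coprime_comm.mp <| hq.coprime_iff_not_dvd.mpr fun hdvd ↦
        hqd (Nat.mem_primeFactors.mpr ⟨hq, hdvd, hd.ne_zero⟩)
      refine ih ht ((Nat.squarefree_mul hcop).mpr ⟨hd, hq.squarefree⟩)
        (fun h ↦ hd1 (Nat.eq_one_of_mul_eq_one_right h)) ?_ h
      rw [Nat.primeFactors_mul hd.ne_zero hq.ne_zero]
      exact Finset.disjoint_union_right.mpr ⟨htd, htq⟩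

theorem finrank_sqrtField {s : Finset ℕ} (hs : ∀ q ∈ s, q.Prime) :
    finrank ℚ (sqrtField s) = 2 ^ s.card := by
  induction s using Finset.induction_on with
  | empty => rw [sqrtField_empty, IntermediateField.finrank_bot, Finset.card_empty, pow_zero]
  | @insert q t hqt ih =>
    have ht : ∀ p ∈ t, p.Prime := fun p hp ↦ hs p (Finset.mem_insert_of_mem hp)
    have hq : q.Prime := hs q (Finset.mem_insert_self q t)
    have hsqrt_q : √(q : ℝ) ∉ sqrtField t := sqrt_notMem_sqrtField ht hq.squarefree
      hq.one_lt.ne' (by rwa [hq.primeFactors, Finset.disjoint_singleton_right])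
    rw [sqrtField_insert, finrank_sup_adjoin_of_sq_mem _ (sq_sqrt_natCast_mem _ q) hsqrt_q, ih ht,
      Finset.card_insert_of_notMem hqt, pow_succ]

theorem finrank_adjoin_sqrt_prime {p : ℕ} (hp : p.Prime) : finrank ℚ ℚ⟮√(p : ℝ)⟯ = 2 := by
  rw [← Finset.iSup_singleton p fun n : ℕ ↦ ℚ⟮√(n : ℝ)⟯]
  exact finrank_sqrtField (s := {p}) (by simpa)

/-- For distinct primes p_1,...,p_r, the ℚ-linear map
ℚ(√p_1) ⊗ ⋯ ⊗ ℚ(√p_r) → ℚ(√p_1,...,√p_r), x_1 ⊗ ⋯ ⊗ x_r ↦ x_1⋯x_r, is an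
isomorphism of ℚ-vector spaces; equivalently [ℚ(√p_1,...,√p_r) : ℚ] = 2^r. -/
theorem stmt2 (r : ℕ) (p : Fin r → ℕ) (hp : ∀ i, Nat.Prime (p i))
    (hinj : Function.Injective p) :
    (∃ T : (⨂[ℚ] i : Fin r, IntermediateField.adjoin ℚ {Real.sqrt (p i : ℝ)}) ≃ₗ[ℚ]
        IntermediateField.adjoin ℚ (Set.range fun i => Real.sqrt (p i)),
      ∀ x : Π i, IntermediateField.adjoin ℚ {Real.sqrt (p i : ℝ)},
        (T (PiTensorProduct.tprod ℚ x) : ℝ) = ∏ i, (x i : ℝ)) ∧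
    Module.finrank ℚ
      (IntermediateField.adjoin ℚ (Set.range fun i => Real.sqrt (p i))) = 2 ^ r := by
  have hfactor (i : Fin r) : finrank ℚ ℚ⟮√(p i : ℝ)⟯ = 2 := finrank_adjoin_sqrt_prime (hp i)
  have (i : Fin r) : FiniteDimensional ℚ ℚ⟮√(p i : ℝ)⟯ :=
    Module.finite_of_finrank_eq_succ (hfactor i)
  have hcompositum : finrank ℚ ↥(⨆ i, ℚ⟮√(p i : ℝ)⟯) = 2 ^ r := by
    have h := finrank_sqrtField (s := Finset.univ.image p) (by simpa using hp)
    rwa [sqrtField, Finset.iSup_finset_image, ← Finset.iSup_coe, Finset.coe_univ, iSup_univ,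
      Finset.card_image_of_injective _ hinj, Finset.card_univ, Fintype.card_fin] at h
  rw [← Set.iUnion_singleton_eq_range, adjoin_iUnion]
  refine ⟨exists_linearEquiv_piTensorProduct_of_finrank_iSup _ ?_, hcompositum⟩
  rw [hcompositum, Finset.prod_congr rfl fun i _ ↦ hfactor i, Finset.prod_const, Finset.card_univ,
    Fintype.card_fin]
end

section
/- Let p_1, ..., p_{r-1} be distinct primes and p_r a prime distinct from all of them. Then √p_r ∉ Q(√p_1, ..., √p_{r-1}); in particular Q(√p_1,...,√p_{r-1}) ∩ Q(√p_r) = Q. -/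
/-!
Let `K = ℚ(√p : p ∈ s)` and let `a ∉ s` be prime. If `√m ∈ K(√a)` for a squarefree `m`,
write `√m = x + y√a` with `x, y ∈ K`. Squaring gives `2xy√a ∈ K`, and `√a ∉ K` by
induction, so `x = 0` or `y = 0`. If `y = 0` then `√m ∈ K`; if `x = 0` then `√(m/a)` or
`√(ma)` lies in `K`. By induction on `s`, every prime factor of `m` therefore lies in `s`.
For the intersection: an element `x + y√q` of `ℚ(√q)` with `y ≠ 0` would put `√q` into
the other field.
-/

open IntermediateField

namespace IntermediateField

variable {F E : Type*} [Field F] [Field E] [Algebra F E]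

theorem exists_eq_add_mul_of_mem_adjoin_simple_s4 {d : E} {c : F} (hc : algebraMap F E c = d ^ 2)
    {z : E} (hz : z ∈ F⟮d⟯) : ∃ x y : F, z = algebraMap F E x + algebraMap F E y * d := by
  have hd : IsAlgebraic F d :=
    (IsIntegral.of_pow two_pos (hc ▸ isIntegral_algebraMap)).isAlgebraic
  rw [← mem_toSubalgebra, adjoin_simple_toSubalgebra_of_isAlgebraic hd] at hz
  induction hz using Algebra.adjoin_induction with
  | mem w hw => exact ⟨0, 1, by simp [Set.mem_singleton_iff.mp hw]⟩
  | algebraMap w => exact ⟨w, 0, by simp⟩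
  | add _ _ _ _ ih ih' =>
    obtain ⟨⟨x, y, rfl⟩, ⟨x', y', rfl⟩⟩ := And.intro ih ih'
    exact ⟨x + x', y + y', by simp only [map_add]; ring⟩
  | mul _ _ _ _ ih ih' =>
    obtain ⟨⟨x, y, rfl⟩, ⟨x', y', rfl⟩⟩ := And.intro ih ih'
    exact ⟨x * x' + y * y' * c, x * y' + y * x', by simp only [map_add, map_mul, hc]; ring⟩

theorem inf_adjoin_simple_eq_bot_of_sq {K : IntermediateField F E} {d : E} {c : F}
    (hc : algebraMap F E c = d ^ 2) (hdK : d ∉ K) : K ⊓ F⟮d⟯ = ⊥ := by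
  refine eq_bot_iff.mpr fun z hz ↦ ?_
  obtain ⟨hzK, hzd⟩ := mem_inf.mp hz
  obtain ⟨x, y, rfl⟩ := exists_eq_add_mul_of_mem_adjoin_simple_s4 hc hzd
  rcases eq_or_ne y 0 with rfl | hy
  · simp
  · refine absurd ?_ hdK
    have hy' : algebraMap F E y ≠ 0 := (map_ne_zero _).mpr hy
    have hd : d = (algebraMap F E x + algebraMap F E y * d - algebraMap F E x) /
        algebraMap F E y := by
      field_simp; ring
    rw [hd]
    exact div_mem (sub_mem hzK (algebraMap_mem K x)) (algebraMap_mem K y)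

end IntermediateField

theorem eq_zero_or_eq_zero_of_sq_add_mul_mem {E S : Type*} [Field E] [NeZero (2 : E)]
    [SetLike S E] [SubfieldClass S E] {K : S} {d x y : E} (hx : x ∈ K) (hy : y ∈ K)
    (hd : d ^ 2 ∈ K) (hdK : d ∉ K) (h : (x + y * d) ^ 2 ∈ K) : x = 0 ∨ y = 0 := by
  by_contra! hxy
  obtain ⟨hx0, hy0⟩ := hxy
  refine hdK ?_
  have hd' : d = ((x + y * d) ^ 2 - x ^ 2 - y ^ 2 * d ^ 2) / (2 * x * y) := by
    field_simp; ring
  rw [hd']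
  exact div_mem (sub_mem (sub_mem h (pow_mem hx 2)) (mul_mem (pow_mem hy 2) hd))
    (mul_mem (mul_mem (ofNat_mem K 2) hx) hy)

noncomputable def adjoinSqrts (s : Finset ℕ) : IntermediateField ℚ ℝ :=
  adjoin ℚ ((fun n : ℕ ↦ √(n : ℝ)) '' s)

theorem adjoinSqrts_insert (a : ℕ) (s : Finset ℕ) :
    adjoinSqrts (insert a s) = (adjoin (adjoinSqrts s) {√(a : ℝ)}).restrictScalars ℚ := by
  rw [adjoinSqrts, adjoinSqrts, Finset.coe_insert, Set.image_insert_eq, ← Set.union_singleton]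
  exact (adjoin_adjoin_left ℚ _ _).symm

theorem Nat.eq_one_of_squarefree_of_sqrt_mem_bot {m : ℕ} (hm : Squarefree m)
    (h : √(m : ℝ) ∈ (⊥ : IntermediateField ℚ ℝ)) : m = 1 := by
  obtain ⟨x, hx⟩ := mem_bot.mp h
  have hsq : IsSquare m := by
    by_contra hns
    exact irrational_sqrt_natCast_iff.mpr hns ⟨x, by simpa using hx⟩
  obtain ⟨k, rfl⟩ := hsq
  rw [Nat.isUnit_iff.mp (hm k dvd_rfl), mul_one]

theorem primeFactors_subset_insert_of_sqrt_eq_mul_sqrt {K : IntermediateField ℚ ℝ}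
    {s : Finset ℕ} (hK : ∀ n : ℕ, Squarefree n → √(n : ℝ) ∈ K → n.primeFactors ⊆ s)
    {a : ℕ} (ha : a.Prime) (has : a ∉ s) {m : ℕ} (hm : Squarefree m) {y : ℝ} (hy : y ∈ K)
    (h : √(m : ℝ) = y * √(a : ℝ)) : m.primeFactors ⊆ insert a s := by
  by_cases hdvd : a ∣ m
  · obtain ⟨c, rfl⟩ := hdvd
    have hc : √(c : ℝ) = y := by
      rw [Nat.cast_mul, Real.sqrt_mul (Nat.cast_nonneg a), mul_comm] at h
      exact mul_right_cancel₀ (Real.sqrt_ne_zero'.mpr (mod_cast ha.pos)) h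
    rw [Nat.primeFactors_mul ha.ne_zero hm.of_mul_right.ne_zero, ha.primeFactors]
    exact Finset.union_subset_union le_rfl (hK c hm.of_mul_right (hc ▸ hy))
  · have hma : Squarefree (m * a) :=
      Nat.squarefree_mul_iff.mpr ⟨(ha.coprime_iff_not_dvd.mpr hdvd).symm, hm, ha.squarefree⟩
    have hmaK : √((m * a : ℕ) : ℝ) ∈ K := by
      rw [Nat.cast_mul, Real.sqrt_mul (Nat.cast_nonneg m), h, mul_assoc,
        Real.mul_self_sqrt (Nat.cast_nonneg a)]
      exact mul_mem hy (K.natCast_mem a)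
    exact absurd (hK _ hma hmaK (by simp [ha.ne_zero, hm.ne_zero, ha])) has

theorem primeFactors_subset_of_sqrt_mem_adjoinSqrts {s : Finset ℕ} (hs : ∀ p ∈ s, p.Prime)
    {m : ℕ} (hm : Squarefree m) (h : √(m : ℝ) ∈ adjoinSqrts s) : m.primeFactors ⊆ s := by
  induction s using Finset.induction_on generalizing m with
  | empty =>
    rw [adjoinSqrts, Finset.coe_empty, Set.image_empty, adjoin_empty] at h
    simp [Nat.eq_one_of_squarefree_of_sqrt_mem_bot hm h]
  | insert a s has ih =>
    have ha : a.Prime := hs a (Finset.mem_insert_self a s)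
    replace ih (n : ℕ) := @ih (fun p hp ↦ hs p (Finset.mem_insert_of_mem hp)) n
    set K := adjoinSqrts s
    have haK : √(a : ℝ) ∉ K := fun haK ↦
      has (ih a ha.squarefree haK ha.mem_primeFactors_self)
    have hsqa : √(a : ℝ) ^ 2 = a := Real.sq_sqrt (Nat.cast_nonneg a)
    rw [adjoinSqrts_insert, mem_restrictScalars] at h
    obtain ⟨x, y, hxy⟩ :=
      exists_eq_add_mul_of_mem_adjoin_simple_s4 (c := (a : K)) (by simp [hsqa]) h
    simp only [IntermediateField.algebraMap_apply] at hxy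
    have hsqm : ((x : ℝ) + y * √(a : ℝ)) ^ 2 ∈ K := by
      rw [← hxy, Real.sq_sqrt (Nat.cast_nonneg m)]
      exact K.natCast_mem m
    rcases eq_zero_or_eq_zero_of_sq_add_mul_mem x.2 y.2 (by rw [hsqa]; exact K.natCast_mem a)
      haK hsqm with hx | hy
    · exact primeFactors_subset_insert_of_sqrt_eq_mul_sqrt ih ha has hm y.2
        (by simpa [hx] using hxy)
    · have hmK : √(m : ℝ) ∈ K := by simp [hy, hxy]
      exact (ih m hm hmK).trans (Finset.subset_insert a s)

theorem stmt4_general (r : ℕ) (p : Fin r → ℕ) (hp : ∀ i, Nat.Prime (p i))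
    (q : ℕ) (hq : q.Prime) (hqp : ∀ i, q ≠ p i) :
    Real.sqrt q ∉ IntermediateField.adjoin ℚ (Set.range fun i => Real.sqrt (p i)) ∧
    IntermediateField.adjoin ℚ (Set.range fun i => Real.sqrt (p i)) ⊓
      IntermediateField.adjoin ℚ {Real.sqrt (q : ℝ)} = ⊥ := by
  have hK : adjoin ℚ (Set.range fun i ↦ √(p i : ℝ)) = adjoinSqrts (Finset.univ.image p) := by
    rw [adjoinSqrts, Finset.coe_image, Finset.coe_univ, Set.image_univ, ← Set.range_comp]
    rfl
  have hqK : √(q : ℝ) ∉ adjoin ℚ (Set.range fun i ↦ √(p i : ℝ)) := by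
    rw [hK]
    intro h
    have hs : ∀ n ∈ Finset.univ.image p, n.Prime := by simpa using hp
    have hsub := primeFactors_subset_of_sqrt_mem_adjoinSqrts hs hq.squarefree h
    obtain ⟨i, -, hi⟩ := Finset.mem_image.mp (hsub hq.mem_primeFactors_self)
    exact hqp i hi.symm
  exact ⟨hqK, inf_adjoin_simple_eq_bot_of_sq (c := q) (by simp [Real.sq_sqrt]) hqK⟩

/-- For distinct primes p_1,...,p_{r-1} and a prime q distinct from all of them:
√q ∉ ℚ(√p_1,...,√p_{r-1}); in particular the two fields intersect in ℚ. -/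
theorem stmt4 (r : ℕ) (p : Fin r → ℕ) (hp : ∀ i, Nat.Prime (p i))
    (hinj : Function.Injective p)
    (q : ℕ) (hq : q.Prime) (hqp : ∀ i, q ≠ p i) :
    Real.sqrt q ∉ IntermediateField.adjoin ℚ (Set.range fun i => Real.sqrt (p i)) ∧
    IntermediateField.adjoin ℚ (Set.range fun i => Real.sqrt (p i)) ⊓
      IntermediateField.adjoin ℚ {Real.sqrt (q : ℝ)} = ⊥ :=
  stmt4_general r p hp q hq hqp
end

section
/- The real numbers {√n : n a squarefree positive integer} are linearly independent over Q. -/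
open Real

namespace Stmt7Aux

/-- The subalgebra of ℝ generated over ℚ by the square roots of the elements of `P`. -/
noncomputable def A (P : Finset ℕ) : Subalgebra ℚ ℝ :=
  Algebra.adjoin ℚ {x : ℝ | ∃ p ∈ P, x = Real.sqrt p}

lemma sqrt_mem_of_mem {P : Finset ℕ} {p : ℕ} (hp : p ∈ P) : Real.sqrt p ∈ A P :=
  Algebra.subset_adjoin ⟨p, hp, rfl⟩

lemma A_mono {P Q : Finset ℕ} (h : P ⊆ Q) : A P ≤ A Q := by
  apply Algebra.adjoin_mono
  rintro x ⟨p, hp, rfl⟩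
  exact ⟨p, h hp, rfl⟩

lemma natCast_mem (P : Finset ℕ) (n : ℕ) : (n : ℝ) ∈ A P := by
  have : ((n : ℚ) : ℝ) ∈ A P := (A P).algebraMap_mem (n : ℚ)
  simpa using this

/-- Every element of `A (insert p P)` has the form `a + b * √p` with `a, b ∈ A P`. -/
lemma rep {P : Finset ℕ} {p : ℕ} {x : ℝ} (hx : x ∈ A (insert p P)) :
    ∃ a ∈ A P, ∃ b ∈ A P, x = a + b * Real.sqrt p := by
  set T : Subalgebra ℚ ℝ :=
    { carrier := {x : ℝ | ∃ a ∈ A P, ∃ b ∈ A P, x = a + b * Real.sqrt p}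
      mul_mem' := by
        rintro x y ⟨a, ha, b, hb, rfl⟩ ⟨c, hc, d, hd, rfl⟩
        refine ⟨a * c + b * d * p, ?_, a * d + b * c, ?_, ?_⟩
        · exact add_mem (mul_mem ha hc) (mul_mem (mul_mem hb hd) (natCast_mem P p))
        · exact add_mem (mul_mem ha hd) (mul_mem hb hc)
        · have hs : Real.sqrt p * Real.sqrt p = (p : ℝ) :=
            Real.mul_self_sqrt (by positivity)
          linear_combination b * d * hs
      add_mem' := by
        rintro x y ⟨a, ha, b, hb, rfl⟩ ⟨c, hc, d, hd, rfl⟩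
        exact ⟨a + c, add_mem ha hc, b + d, add_mem hb hd, by ring⟩
      algebraMap_mem' := fun r =>
        ⟨algebraMap ℚ ℝ r, (A P).algebraMap_mem r, 0, zero_mem _, by ring⟩ }
  have hle : A (insert p P) ≤ T := by
    apply Algebra.adjoin_le
    rintro x ⟨q, hq, rfl⟩
    rcases Finset.mem_insert.mp hq with h | h
    · exact ⟨0, zero_mem _, 1, one_mem _, by rw [h]; ring⟩
    · exact ⟨Real.sqrt q, sqrt_mem_of_mem h, 0, zero_mem _, by ring⟩
  exact hle hx

/-- Joint induction: `A P` is closed under inverses, and `√n ∉ A P` whenever `n` is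
squarefree and has a prime factor outside `P`. -/
theorem key (P : Finset ℕ) (hP : ∀ q ∈ P, Nat.Prime q) :
    (∀ x ∈ A P, x ≠ 0 → x⁻¹ ∈ A P) ∧
    (∀ n : ℕ, Squarefree n → (∃ q : ℕ, q.Prime ∧ q ∣ n ∧ q ∉ P) → Real.sqrt n ∉ A P) := by
  induction P using Finset.induction_on with
  | empty =>
    have hbot : A (∅ : Finset ℕ) = ⊥ := by
      rw [A]
      convert Algebra.adjoin_empty ℚ ℝ using 2
      simp
    constructor
    · intro x hx hx0
      rw [hbot, Algebra.mem_bot] at hx ⊢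
      rcases hx with ⟨q, rfl⟩
      exact ⟨q⁻¹, by push_cast; ring⟩
    · rintro n hn ⟨q, hq, hqn, -⟩ hmem
      rw [hbot, Algebra.mem_bot] at hmem
      rcases hmem with ⟨r, hr⟩
      have hirr : Irrational (Real.sqrt n) := by
        rw [irrational_sqrt_natCast_iff]
        rintro ⟨k, hk⟩
        have hqk : q ∣ k := hq.dvd_of_dvd_pow (n := 2) (by rw [sq, ← hk]; exact hqn)
        have : q * q ∣ n := by rw [hk]; exact mul_dvd_mul hqk hqk
        exact hq.not_isUnit (hn q this)
      exact hirr ⟨r, (eq_ratCast (algebraMap ℚ ℝ) r).symm.trans hr⟩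
  | @insert p P hpP ih =>
    have hp : p.Prime := hP p (Finset.mem_insert_self p P)
    have hP' : ∀ q ∈ P, Nat.Prime q := fun q hq => hP q (Finset.mem_insert_of_mem hq)
    obtain ⟨inv₀, notMem₀⟩ := ih hP'
    have hsp : Real.sqrt p ∉ A P :=
      notMem₀ p hp.squarefree ⟨p, hp, dvd_rfl, hpP⟩
    have hsub : A P ≤ A (insert p P) := A_mono (Finset.subset_insert p P)
    have hppos : (0 : ℝ) < p := by exact_mod_cast hp.pos
    have hsppos : (0 : ℝ) < Real.sqrt p := Real.sqrt_pos.mpr hppos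
    have hsq : Real.sqrt p * Real.sqrt p = (p : ℝ) := Real.mul_self_sqrt hppos.le
    constructor
    · -- inverse closure
      intro x hx hx0
      obtain ⟨a, ha, b, hb, rfl⟩ := rep hx
      have hy : a - b * Real.sqrt p ≠ 0 := by
        intro h
        have hab : a = b * Real.sqrt p := by linarith [sub_eq_zero.mp h]
        by_cases hb0 : b = 0
        · exact hx0 (by rw [hab, hb0]; ring)
        · have : Real.sqrt p = a * b⁻¹ := by
            rw [hab, mul_comm b, mul_assoc, mul_inv_cancel₀ hb0, mul_one]
          exact hsp (this ▸ mul_mem ha (inv₀ b hb hb0))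
      have hprod : (a + b * Real.sqrt p) * (a - b * Real.sqrt p) = a * a - b * b * p := by
        linear_combination (-(b * b)) * hsq
      have hmemprod : a * a - b * b * (p : ℝ) ∈ A P :=
        sub_mem (mul_mem ha ha) (mul_mem (mul_mem hb hb) (natCast_mem P p))
      have hprod0 : a * a - b * b * (p : ℝ) ≠ 0 := by
        rw [← hprod]
        exact mul_ne_zero hx0 hy
      have hinv : (a * a - b * b * (p : ℝ))⁻¹ ∈ A P := inv₀ _ hmemprod hprod0
      have : (a + b * Real.sqrt p)⁻¹ =
          (a - b * Real.sqrt p) * (a * a - b * b * p)⁻¹ := by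
        rw [← hprod, mul_inv]
        field_simp
      rw [this]
      exact mul_mem
        (sub_mem (hsub ha)
          (mul_mem (hsub hb) (sqrt_mem_of_mem (Finset.mem_insert_self p P))))
        (hsub hinv)
    · -- non-membership
      rintro n hn ⟨q, hq, hqn, hqP⟩ hmem
      have hqP' : q ∉ P := fun h => hqP (Finset.mem_insert_of_mem h)
      have hqp : q ≠ p := fun h => hqP (h ▸ Finset.mem_insert_self p P)
      obtain ⟨a, ha, b, hb, hab⟩ := rep hmem
      have hnn : (0 : ℝ) ≤ (n : ℝ) := by positivity
      have hs2 : Real.sqrt n * Real.sqrt n = (n : ℝ) := Real.mul_self_sqrt hnn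
      have hsqn : (n : ℝ) = a * a + 2 * (a * b) * Real.sqrt p + b * b * (p : ℝ) := by
        have h2 : (n : ℝ) = (a + b * Real.sqrt p) * (a + b * Real.sqrt p) := by
          rw [← hs2, hab]
        linear_combination h2 + (b * b) * hsq
      have hmem2 : 2 * (a * b) * Real.sqrt p ∈ A P := by
        have heq : 2 * (a * b) * Real.sqrt p = (n : ℝ) - a * a - b * b * (p : ℝ) := by
          linear_combination -hsqn
        rw [heq]
        exact sub_mem (sub_mem (natCast_mem P n) (mul_mem ha ha))
          (mul_mem (mul_mem hb hb) (natCast_mem P p))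
      by_cases hb0 : b = 0
      · apply notMem₀ n hn ⟨q, hq, hqn, hqP'⟩
        rw [hab, hb0, zero_mul, add_zero]
        exact ha
      by_cases ha0 : a = 0
      · have hbn : Real.sqrt n = b * Real.sqrt p := by rw [hab, ha0, zero_add]
        by_cases hpn : p ∣ n
        · obtain ⟨m, hm⟩ := hpn
          have hmsf : Squarefree m := hn.squarefree_of_dvd ⟨p, by rw [hm]; ring⟩
          have hqm : q ∣ m := by
            rcases (Nat.Prime.dvd_mul hq).mp (hm ▸ hqn) with h | h
            · exact absurd ((Nat.prime_dvd_prime_iff_eq hq hp).mp h) hqp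
            · exact h
          apply notMem₀ m hmsf ⟨q, hq, hqm, hqP'⟩
          have h1 : Real.sqrt n = Real.sqrt p * Real.sqrt m := by
            rw [hm]; push_cast; exact Real.sqrt_mul (by positivity) _
          have h2 : Real.sqrt p * b = Real.sqrt p * Real.sqrt m := by
            rw [mul_comm (Real.sqrt p) b, ← hbn, h1]
          have : Real.sqrt m = b := (mul_left_cancel₀ hsppos.ne' h2).symm
          rw [this]; exact hb
        · have hcop : Nat.Coprime n p := ((Nat.Prime.coprime_iff_not_dvd hp).mpr hpn).symm
          have hsf : Squarefree (n * p) :=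
            Nat.squarefree_mul_iff.mpr ⟨hcop, hn, hp.squarefree⟩
          apply notMem₀ (n * p) hsf ⟨q, hq, hqn.mul_right p, hqP'⟩
          have heq : Real.sqrt (↑(n * p)) = b * (p : ℝ) := by
            push_cast
            rw [Real.sqrt_mul hnn, hbn]
            linear_combination b * hsq
          rw [heq]
          exact mul_mem hb (natCast_mem P p)
      · apply hsp
        have h2ab : (2 * (a * b) : ℝ) ≠ 0 :=
          mul_ne_zero two_ne_zero (mul_ne_zero ha0 hb0)
        have h2mem : (2 : ℝ) * (a * b) ∈ A P := by
          have h2 : (2 : ℝ) ∈ A P := by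
            have := natCast_mem P 2; simpa using this
          exact mul_mem h2 (mul_mem ha hb)
        have hinv : ((2 : ℝ) * (a * b))⁻¹ ∈ A P := inv₀ _ h2mem h2ab
        have heq : Real.sqrt p = (2 * (a * b))⁻¹ * (2 * (a * b) * Real.sqrt p) := by
          rw [← mul_assoc, inv_mul_cancel₀ h2ab, one_mul]
        rw [heq]
        exact mul_mem hinv hmem2

lemma ratCast_mem (P : Finset ℕ) (q : ℚ) : (q : ℝ) ∈ A P := by
  have := (A P).algebraMap_mem q
  rwa [eq_ratCast] at this

lemma sqrt_mem_A {P : Finset ℕ} {n : ℕ} (hn : Squarefree n)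
    (hsub : n.primeFactors ⊆ P) : Real.sqrt n ∈ A P := by
  classical
  suffices h : ∀ s : Finset ℕ, s ⊆ P → Real.sqrt (↑(∏ q ∈ s, q)) ∈ A P by
    have := h n.primeFactors hsub
    rwa [Nat.prod_primeFactors_of_squarefree hn] at this
  intro s
  induction s using Finset.induction_on with
  | empty => intro _; simpa using one_mem (A P)
  | @insert q s hqs ihs =>
    intro hsub'
    rw [Finset.prod_insert hqs, Nat.cast_mul, Real.sqrt_mul (by positivity)]
    exact mul_mem (sqrt_mem_of_mem (hsub' (Finset.mem_insert_self q s)))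
      (ihs (fun x hx => hsub' (Finset.mem_insert_of_mem hx)))

lemma div_facts {p m : ℕ} (hp : p.Prime) (hm : Squarefree m) (hdvd : p ∣ m) :
    Squarefree (m / p) ∧ ¬p ∣ (m / p) ∧ p * (m / p) = m ∧
      Real.sqrt m = Real.sqrt p * Real.sqrt ((m / p : ℕ) : ℝ) := by
  have hmp : p * (m / p) = m := Nat.mul_div_cancel' hdvd
  refine ⟨hm.squarefree_of_dvd (Nat.div_dvd_of_dvd hdvd), ?_, hmp, ?_⟩
  · intro h
    have : p * p ∣ m := by rw [← hmp]; exact mul_dvd_mul_left p h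
    exact hp.not_isUnit (hm p this)
  · have hcast : (m : ℝ) = (p : ℝ) * ((m / p : ℕ) : ℝ) := by exact_mod_cast hmp.symm
    rw [hcast]; exact Real.sqrt_mul (by positivity) _

/-- Main summation lemma. -/
theorem li2 : ∀ P : Finset ℕ, (∀ q ∈ P, Nat.Prime q) →
    ∀ s : Finset ℕ, (∀ n ∈ s, Squarefree n ∧ n.primeFactors ⊆ P) →
    ∀ g : ℕ → ℚ, (∑ n ∈ s, (g n : ℝ) * Real.sqrt n) = 0 → ∀ n ∈ s, g n = 0 := by
  classical
  intro P
  induction P using Finset.induction_on with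
  | empty =>
    intro _ s hs g hsum n hn
    have hall : ∀ m ∈ s, m = 1 := by
      intro m hm
      obtain ⟨hsf, hsub⟩ := hs m hm
      have h0 : m.primeFactors = ∅ := Finset.subset_empty.mp hsub
      rcases Nat.primeFactors_eq_empty.mp h0 with h | h
      · exact absurd h hsf.ne_zero
      · exact h
    have hn1 : n = 1 := hall n hn
    have hs1 : s ⊆ {1} := fun m hm => Finset.mem_singleton.mpr (hall m hm)
    rcases Finset.subset_singleton_iff.mp hs1 with h | h
    · rw [h] at hn; exact absurd hn (Finset.notMem_empty n)
    · rw [h] at hsum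
      rw [Finset.sum_singleton] at hsum
      simp only [Nat.cast_one, Real.sqrt_one, mul_one, Rat.cast_eq_zero] at hsum
      rw [hn1]; exact hsum
  | @insert p P hpP ih =>
    intro hP s hs g hsum n hn
    have hp : p.Prime := hP p (Finset.mem_insert_self p P)
    have hP' : ∀ q ∈ P, Nat.Prime q := fun q hq => hP q (Finset.mem_insert_of_mem hq)
    obtain ⟨inv₀, notMem₀⟩ := key P hP'
    have hsp : Real.sqrt p ∉ A P := notMem₀ p hp.squarefree ⟨p, hp, dvd_rfl, hpP⟩
    set s₁ := s.filter (fun m => ¬p ∣ m) with hs₁def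
    set s₂ := s.filter (fun m => p ∣ m) with hs₂def
    -- facts about members
    have hmem1 : ∀ m ∈ s₁, Squarefree m ∧ m.primeFactors ⊆ P := by
      intro m hm
      rw [hs₁def, Finset.mem_filter] at hm
      obtain ⟨hsf, hsub⟩ := hs m hm.1
      refine ⟨hsf, fun q hq => ?_⟩
      rcases Finset.mem_insert.mp (hsub hq) with h | h
      · exact absurd (Nat.dvd_of_mem_primeFactors hq) (by rw [h]; exact hm.2)
      · exact h
    have hmem2 : ∀ m ∈ s₂, Squarefree (m / p) ∧ (m / p).primeFactors ⊆ P := by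
      intro m hm
      rw [hs₂def, Finset.mem_filter] at hm
      obtain ⟨hsf, hsub⟩ := hs m hm.1
      obtain ⟨hsf', hnd, hmp, -⟩ := div_facts hp hsf hm.2
      refine ⟨hsf', fun q hq => ?_⟩
      have hdvd : (m / p) ∣ m := Nat.div_dvd_of_dvd hm.2
      have : q ∈ m.primeFactors :=
        Nat.primeFactors_mono hdvd hsf.ne_zero hq
      rcases Finset.mem_insert.mp (hsub this) with h | h
      · exact absurd (Nat.dvd_of_mem_primeFactors hq) (by rw [h]; exact hnd)
      · exact h
    set x := ∑ m ∈ s₁, (g m : ℝ) * Real.sqrt m with hx_def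
    set y := ∑ m ∈ s₂, (g m : ℝ) * Real.sqrt (m / p : ℕ) with hy_def
    have hsplit : x + Real.sqrt p * y = 0 := by
      rw [← hsum, hx_def, hy_def, Finset.mul_sum]
      have hsum2 : ∑ m ∈ s₂, Real.sqrt p * ((g m : ℝ) * Real.sqrt (m / p : ℕ)) =
          ∑ m ∈ s₂, (g m : ℝ) * Real.sqrt m := by
        apply Finset.sum_congr rfl
        intro m hm
        rw [hs₂def, Finset.mem_filter] at hm
        obtain ⟨-, -, -, hsqrt⟩ := div_facts hp (hs m hm.1).1 hm.2
        rw [hsqrt]; ring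
      rw [hsum2]
      rw [add_comm]
      exact Finset.sum_filter_add_sum_filter_not s (fun m => p ∣ m) _
    have hx : x ∈ A P :=
      sum_mem fun m hm => mul_mem (ratCast_mem P (g m))
        (sqrt_mem_A (hmem1 m hm).1 (hmem1 m hm).2)
    have hy : y ∈ A P :=
      sum_mem fun m hm => mul_mem (ratCast_mem P (g m))
        (sqrt_mem_A (hmem2 m hm).1 (hmem2 m hm).2)
    have hy0 : y = 0 := by
      by_contra hy0
      apply hsp
      have heq : Real.sqrt p = (-x) * y⁻¹ := by
        field_simp
        linarith [hsplit]
      rw [heq]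
      exact mul_mem (neg_mem hx) (inv₀ y hy hy0)
    have hx0 : x = 0 := by
      rw [hy0, mul_zero, add_zero] at hsplit; exact hsplit
    by_cases hpn : p ∣ n
    · -- n ∈ s₂
      have hns₂ : n ∈ s₂ := by rw [hs₂def, Finset.mem_filter]; exact ⟨hn, hpn⟩
      have hinj : ∀ m₁ ∈ s₂, ∀ m₂ ∈ s₂, m₁ / p = m₂ / p → m₁ = m₂ := by
        intro m₁ hm₁ m₂ hm₂ h
        rw [hs₂def, Finset.mem_filter] at hm₁ hm₂
        rw [← Nat.mul_div_cancel' hm₁.2, ← Nat.mul_div_cancel' hm₂.2, h]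
      have hsum3 : (∑ m ∈ s₂.image (· / p), ((fun k => g (p * k)) m : ℝ) * Real.sqrt m) = 0 := by
        rw [Finset.sum_image hinj]
        rw [← hy0, hy_def]
        apply Finset.sum_congr rfl
        intro m hm
        rw [hs₂def, Finset.mem_filter] at hm
        simp only
        rw [Nat.mul_div_cancel' hm.2]
      have hcond : ∀ m ∈ s₂.image (· / p), Squarefree m ∧ m.primeFactors ⊆ P := by
        intro m hm
        obtain ⟨k, hk, rfl⟩ := Finset.mem_image.mp hm
        exact hmem2 k hk
      have := ih hP' (s₂.image (· / p)) hcond (fun k => g (p * k)) hsum3 (n / p)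
        (Finset.mem_image_of_mem _ hns₂)
      simp only [Nat.mul_div_cancel' hpn] at this
      exact this
    · have hns₁ : n ∈ s₁ := by rw [hs₁def, Finset.mem_filter]; exact ⟨hn, hpn⟩
      exact ih hP' s₁ hmem1 g hx0 n hns₁

end Stmt7Aux

/-- The square roots of the squarefree positive integers are linearly independent over ℚ. -/
theorem stmt7 :
    LinearIndependent ℚ (fun n : {n : ℕ // Squarefree n} => Real.sqrt ((n : ℕ) : ℝ)) := by
  classical
  rw [linearIndependent_iff']
  intro s g hsum i hi
  set t := s.image Subtype.val with ht
  set P := t.biUnion Nat.primeFactors with hPdef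
  have hPp : ∀ q ∈ P, Nat.Prime q := by
    intro q hq
    obtain ⟨m, -, hq'⟩ := Finset.mem_biUnion.mp hq
    exact Nat.prime_of_mem_primeFactors hq'
  set g' : ℕ → ℚ := fun n => if h : Squarefree n then g ⟨n, h⟩ else 0 with hg'
  have hsum' : ∑ n ∈ t, (g' n : ℝ) * Real.sqrt n = 0 := by
    rw [ht, Finset.sum_image (fun a _ b _ h => Subtype.ext h)]
    rw [← hsum]
    apply Finset.sum_congr rfl
    intro j _
    rw [Rat.smul_def]
    congr 2
    simp only [hg']
    rw [dif_pos j.2]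
  have hcond : ∀ n ∈ t, Squarefree n ∧ n.primeFactors ⊆ P := by
    intro n hn
    obtain ⟨j, -, rfl⟩ := Finset.mem_image.mp hn
    exact ⟨j.2, Finset.subset_biUnion_of_mem Nat.primeFactors hn⟩
  have hres := Stmt7Aux.li2 P hPp t hcond g' hsum' i.val
    (Finset.mem_image_of_mem _ hi)
  simpa only [hg', i.2, dif_pos] using hres
end

section
/- Let n and d be elements of Q(√(Q^+)) with d ≠ 0, and suppose d = d_0 + √p·d_1 where p is a prime, d_0, d_1 ∈ Q(√(Q^+)), and d_0, d_1 lie in the subfield generated by square roots of rationals whose numerator and denominator are coprime to p. Then d_0² − p·d_1² ≠ 0 and n/d = n(d_0 − √p·d_1)/(d_0² − p·d_1²). -/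
/-!
Let `K_p` be the field generated by square roots of positive rationals prime to `p`. Every
rational square `q ≠ 0` in `K_p` has even `p`-adic valuation: adjoin the square roots `y`,
`y² = a`, one at a time; if `y` is new then `(u + y v)² = q` with `u, v` in the smaller field
forces `u v = 0`, so `q = u²` or `q = a v²`, and `v_p(a) = 0`. Hence `√p ∉ K_p`, so for
`d₀, d₁ ∈ K_p` neither factor of `d₀² - p d₁² = (d₀ + √p d₁)(d₀ - √p d₁)` vanishes unless `d = 0`.
-/

open IntermediateField

section QuadraticExtension

variable {F L : Type*} [Field F] [Field L] [Algebra F L] {K : IntermediateField F L} {s : L}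

theorem sq_sub_sq_mul_ne_zero_of_notMem (hs : s ∉ K) {u v : L} (hu : u ∈ K) (hv : v ∈ K)
    (h : u + s * v ≠ 0) : u ^ 2 - s ^ 2 * v ^ 2 ≠ 0 := by
  intro h0
  have hconj : u - s * v = 0 := by
    have : (u + s * v) * (u - s * v) = 0 := by linear_combination h0
    exact (mul_eq_zero.mp this).resolve_left h
  by_cases hv0 : v = 0
  · exact h (by simp_all)
  · rw [eq_div_of_mul_eq hv0 (by linear_combination -hconj : s * v = u)] at hs
    exact hs (div_mem hu hv)

theorem exists_eq_add_mul_of_mem_adjoin_simple (hs2 : s ^ 2 ∈ K) (hs : s ∉ K) {x : L}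
    (hx : x ∈ K⟮s⟯) : ∃ u ∈ K, ∃ v ∈ K, x = u + s * v := by
  let E : IntermediateField K L :=
  { carrier := {x | ∃ u ∈ K, ∃ v ∈ K, x = u + s * v}
    add_mem' := by
      rintro _ _ ⟨u, hu, v, hv, rfl⟩ ⟨u', hu', v', hv', rfl⟩
      exact ⟨u + u', add_mem hu hu', v + v', add_mem hv hv', by ring⟩
    mul_mem' := by
      rintro _ _ ⟨u, hu, v, hv, rfl⟩ ⟨u', hu', v', hv', rfl⟩
      exact ⟨u * u' + s ^ 2 * (v * v'), add_mem (mul_mem hu hu') (mul_mem hs2 (mul_mem hv hv')),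
        u * v' + v * u', add_mem (mul_mem hu hv') (mul_mem hv hu'), by ring⟩
    algebraMap_mem' := fun k => ⟨k, k.2, 0, zero_mem K, by simp⟩
    inv_mem' := by
      rintro _ ⟨u, hu, v, hv, rfl⟩
      by_cases hx0 : u + s * v = 0
      · exact ⟨0, zero_mem K, 0, zero_mem K, by simp [hx0]⟩
      have hN := sq_sub_sq_mul_ne_zero_of_notMem hs hu hv hx0
      have hNK : u ^ 2 - s ^ 2 * v ^ 2 ∈ K :=
        sub_mem (pow_mem hu 2) (mul_mem hs2 (pow_mem hv 2))
      refine ⟨u / (u ^ 2 - s ^ 2 * v ^ 2), div_mem hu hNK,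
        -(v / (u ^ 2 - s ^ 2 * v ^ 2)), neg_mem (div_mem hv hNK), ?_⟩
      refine inv_eq_of_mul_eq_one_right ?_
      field_simp
      ring }
  have hle : K⟮s⟯ ≤ E := adjoin_simple_le_iff.mpr ⟨0, zero_mem K, 1, one_mem K, by ring⟩
  exact hle hx

end QuadraticExtension

section PadicValuation

variable {p : ℕ} {L : Type*} [Field L] [CharZero L]

theorem padicValRat_eq_zero_of_not_dvd {q : ℚ} (hnum : ¬ (p : ℤ) ∣ q.num) (hden : ¬ p ∣ q.den) :
    padicValRat p q = 0 := by
  simp [padicValRat, padicValInt.eq_zero_of_not_dvd hnum, padicValNat.eq_zero_of_not_dvd hden]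

variable [Fact p.Prime]

variable (p) in
def EvenPadicValOnRatSquares (K : IntermediateField ℚ L) : Prop :=
  ∀ x ∈ K, ∀ q : ℚ, q ≠ 0 → x ^ 2 = q → Even (padicValRat p q)

theorem evenPadicValOnRatSquares_bot : EvenPadicValOnRatSquares p (⊥ : IntermediateField ℚ L) := by
  intro x hx q _ hxq
  obtain ⟨r, rfl⟩ := mem_bot.mp hx
  have hr : r ^ 2 = q := by exact_mod_cast (show (r : L) ^ 2 = q by simpa using hxq)
  rw [← hr, padicValRat.pow]
  exact ⟨padicValRat p r, by push_cast; ring⟩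

theorem EvenPadicValOnRatSquares.adjoin_simple {K : IntermediateField ℚ L}
    (hK : EvenPadicValOnRatSquares p K) {y : L} {a : ℚ} (hy : y ^ 2 = a)
    (ha : padicValRat p a = 0) :
    EvenPadicValOnRatSquares p (K⟮y⟯.restrictScalars ℚ) := by
  intro x hx q hq hxq
  rw [mem_restrictScalars] at hx
  by_cases hyK : y ∈ K
  · have hbot : K⟮y⟯ ≤ ⊥ := adjoin_simple_le_iff.mpr (mem_bot.mpr ⟨⟨y, hyK⟩, rfl⟩)
    obtain ⟨k, rfl⟩ := mem_bot.mp (hbot hx)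
    exact hK k k.2 q hq hxq
  have hratK (r : ℚ) : (r : L) ∈ K := SubfieldClass.ratCast_mem K r
  have hyK2 : y ^ 2 ∈ K := hy ▸ hratK a
  obtain ⟨u, hu, v, hv, rfl⟩ := exists_eq_add_mul_of_mem_adjoin_simple hyK2 hyK hx
  have hexpand : (q : L) - u ^ 2 - a * v ^ 2 = y * (2 * u * v) := by
    linear_combination -hxq + v ^ 2 * hy
  -- `y ∉ K`, so the coefficient `2uv` of `y` in `(u + y v)²` vanishes.
  have huv : u = 0 ∨ v = 0 := by
    by_contra! h
    refine hyK ?_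
    rw [eq_div_of_mul_eq (by simp [h.1, h.2]) hexpand.symm]
    exact div_mem (sub_mem (sub_mem (hratK q) (pow_mem hu 2)) (mul_mem (hratK a) (pow_mem hv 2)))
      (mul_mem (mul_mem (by exact_mod_cast hratK 2) hu) hv)
  rcases huv with rfl | rfl
  · have ha0 : a ≠ 0 := by
      rintro rfl
      exact hyK (by simp at hy; simp [hy])
    have hv2 : v ^ 2 = ((q / a : ℚ) : L) := by
      push_cast
      rw [eq_div_iff (by exact_mod_cast ha0)]
      linear_combination -hexpand
    simpa [padicValRat.div hq ha0, ha] using hK v hv (q / a) (div_ne_zero hq ha0) hv2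
  · exact hK u hu q hq (by simpa using hxq)

theorem evenPadicValOnRatSquares_adjoin {S : Set L}
    (hS : ∀ y ∈ S, ∃ a : ℚ, y ^ 2 = a ∧ padicValRat p a = 0) :
    EvenPadicValOnRatSquares p (adjoin ℚ S) := by
  intro x hx
  obtain ⟨T, hTS, hxT⟩ := exists_finset_of_mem_adjoin hx
  refine induction_on_adjoin_finset T (EvenPadicValOnRatSquares p) evenPadicValOnRatSquares_bot
    (fun K y hy hK => ?_) x hxT
  obtain ⟨a, hya, ha⟩ := hS y (hTS hy)
  exact hK.adjoin_simple hya ha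

end PadicValuation

theorem Real.sqrt_prime_notMem_adjoin_sqrt_padicUnits {p : ℕ} (hp : p.Prime) :
    √p ∉ adjoin ℚ {y : ℝ | ∃ q : ℚ, 0 < q ∧ ¬ (p : ℤ) ∣ q.num ∧ ¬ p ∣ q.den ∧ y = √q} := by
  have := Fact.mk hp
  intro h
  refine Int.not_even_one ?_
  rw [← padicValRat.self (p := p) hp.one_lt]
  refine evenPadicValOnRatSquares_adjoin ?_ _ h p (by exact_mod_cast hp.ne_zero) (by simp)
  rintro _ ⟨q, hq, hnum, hden, rfl⟩
  exact ⟨q, Real.sq_sqrt (by exact_mod_cast hq.le), padicValRat_eq_zero_of_not_dvd hnum hden⟩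

theorem stmt9_general (p : ℕ) (hp : p.Prime) (n d d0 d1 : ℝ)
    (hd0 : d0 ∈ IntermediateField.adjoin ℚ
      {y : ℝ | ∃ q : ℚ, 0 < q ∧ ¬ (p : ℤ) ∣ q.num ∧ ¬ p ∣ q.den ∧ y = Real.sqrt q})
    (hd1 : d1 ∈ IntermediateField.adjoin ℚ
      {y : ℝ | ∃ q : ℚ, 0 < q ∧ ¬ (p : ℤ) ∣ q.num ∧ ¬ p ∣ q.den ∧ y = Real.sqrt q})
    (hd : d = d0 + Real.sqrt p * d1) (hdne : d ≠ 0) :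
    d0 ^ 2 - (p : ℝ) * d1 ^ 2 ≠ 0 ∧
      n / d = n * (d0 - Real.sqrt p * d1) / (d0 ^ 2 - (p : ℝ) * d1 ^ 2) := by
  have hsqrt : √p ^ 2 = (p : ℝ) := Real.sq_sqrt (Nat.cast_nonneg p)
  have hN : d0 ^ 2 - (p : ℝ) * d1 ^ 2 ≠ 0 := by
    simpa only [hsqrt] using sq_sub_sq_mul_ne_zero_of_notMem
      (Real.sqrt_prime_notMem_adjoin_sqrt_padicUnits hp) hd0 hd1 (hd ▸ hdne)
  refine ⟨hN, ?_⟩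
  rw [div_eq_div_iff hdne hN, hd]
  linear_combination (n * d1 ^ 2) * hsqrt

/-- Division algorithm in ℚ(√ℚ⁺): if d = d₀ + √p·d₁ with d₀, d₁ in the subfield
generated by square roots of positive rationals whose numerator and denominator
are coprime to the prime p, and d ≠ 0, then d₀² − p·d₁² ≠ 0 and
n/d = n(d₀ − √p·d₁)/(d₀² − p·d₁²). -/
theorem stmt9 (p : ℕ) (hp : p.Prime) (n d d0 d1 : ℝ)
    (hn : n ∈ IntermediateField.adjoin ℚ {y : ℝ | ∃ q : ℚ, 0 < q ∧ y = Real.sqrt q})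
    (hd0 : d0 ∈ IntermediateField.adjoin ℚ
      {y : ℝ | ∃ q : ℚ, 0 < q ∧ ¬ (p : ℤ) ∣ q.num ∧ ¬ p ∣ q.den ∧ y = Real.sqrt q})
    (hd1 : d1 ∈ IntermediateField.adjoin ℚ
      {y : ℝ | ∃ q : ℚ, 0 < q ∧ ¬ (p : ℤ) ∣ q.num ∧ ¬ p ∣ q.den ∧ y = Real.sqrt q})
    (hd : d = d0 + Real.sqrt p * d1) (hdne : d ≠ 0) :
    d0 ^ 2 - (p : ℝ) * d1 ^ 2 ≠ 0 ∧
      n / d = n * (d0 - Real.sqrt p * d1) / (d0 ^ 2 - (p : ℝ) * d1 ^ 2) :=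
  stmt9_general p hp n d d0 d1 hd0 hd1 hd hdne
end
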